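/- An L-layer GNN's output at node u depends only on the depth-L lazy unravelling of u in G (with node features attached): if the feature-labeled lazy unravelling trees of (G, x, u) and (G', x', u') at depth L are isomorphic as labeled trees, then the GNN outputs at u and u' agree. -/

import Mathlib

/-- The layer-wise computation of an L-layer GNN with sum aggregation:
    `x^0 = x0`, `x^{ℓ+1}_u = σ^{ℓ+1}(B^{ℓ+1}·x^ℓ_u + ∑_{v ∈ N(u)} A^{ℓ+1}·x^ℓ_v + b^{ℓ+1})`. -/
def gnnIter {V : Type*} [Fintype V] [DecidableEq V]
    (G : SimpleGraph V) [DecidableRel G.Adj] (dim : ℕ → ℕ)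
    (A B : (ℓ : ℕ) → Matrix (Fin (dim (ℓ + 1))) (Fin (dim ℓ)) ℚ)
    (bias : (ℓ : ℕ) → Fin (dim (ℓ + 1)) → ℚ)
    (σ : ℕ → ℚ → ℚ)
    (x0 : V → Fin (dim 0) → ℚ) : (ℓ : ℕ) → V → Fin (dim ℓ) → ℚ
  | 0 => x0
  | ℓ + 1 => fun u i => σ (ℓ + 1)
      ((B ℓ).mulVec (gnnIter G dim A B bias σ x0 ℓ u) i
        + (∑ v ∈ G.neighborFinset u, (A ℓ).mulVec (gnnIter G dim A B bias σ x0 ℓ v)) i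
        + bias ℓ i)

/-- An L-layer GNN's output at a node depends only on the feature-labeled lazy unravelling
    tree at depth L: if the lazy unravelling trees of (G, x0, u) and (G', x0', u') at depth L
    are isomorphic as labeled trees (a bijection of lazy walks preserving the root, lengths,
    the parent/child relation in both directions, and the feature labels of endpoints),
    then the GNN outputs at u and u' agree. -/
theorem stmt_13 {V V' : Type} [Fintype V] [Fintype V'] [DecidableEq V] [DecidableEq V']
    (G : SimpleGraph V) (G' : SimpleGraph V')
    [DecidableRel G.Adj] [DecidableRel G'.Adj] (dim : ℕ → ℕ)
    (A B : (ℓ : ℕ) → Matrix (Fin (dim (ℓ + 1))) (Fin (dim ℓ)) ℚ)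
    (bias : (ℓ : ℕ) → Fin (dim (ℓ + 1)) → ℚ)
    (σ : ℕ → ℚ → ℚ) (L : ℕ)
    (x0 : V → Fin (dim 0) → ℚ) (x0' : V' → Fin (dim 0) → ℚ)
    (u : V) (u' : V')
    (Φ : {p : List V // p.head? = some u ∧ p.length ≤ L + 1 ∧
            p.Chain' (fun a b => a = b ∨ G.Adj a b)}
        ≃ {p : List V' // p.head? = some u' ∧ p.length ≤ L + 1 ∧
            p.Chain' (fun a b => a = b ∨ G'.Adj a b)})
    (hroot : ∀ p, p.1 = [u] → (Φ p).1 = [u'])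
    (hlen : ∀ p, (Φ p).1.length = p.1.length)
    (hparent : ∀ p q, (∃ w, q.1 = p.1 ++ [w]) → ∃ w', (Φ q).1 = (Φ p).1 ++ [w'])
    (hparent' : ∀ p q, (∃ w', (Φ q).1 = (Φ p).1 ++ [w']) → ∃ w, q.1 = p.1 ++ [w])
    (hlabel : ∀ p, (Φ p).1.getLast?.map x0' = p.1.getLast?.map x0) :
    gnnIter G dim A B bias σ x0 L u = gnnIter G' dim A B bias σ x0' L u' := by
  -- every walk is nonempty
  have hne : ∀ p : {p : List V // p.head? = some u ∧ p.length ≤ L + 1 ∧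
      p.Chain' (fun a b => a = b ∨ G.Adj a b)}, p.1 ≠ [] := by
    rintro ⟨p, hp, -, -⟩ rfl; simp at hp
  have hne' : ∀ p : {p : List V' // p.head? = some u' ∧ p.length ≤ L + 1 ∧
      p.Chain' (fun a b => a = b ∨ G'.Adj a b)}, p.1 ≠ [] := by
    rintro ⟨p, hp, -, -⟩ rfl; simp at hp
  have key : ∀ ℓ : ℕ, ∀ p, ∀ w w', p.1.getLast? = some w →
      (Φ p).1.getLast? = some w' → p.1.length + ℓ ≤ L + 1 →
      gnnIter G dim A B bias σ x0 ℓ w = gnnIter G' dim A B bias σ x0' ℓ w' := by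
    intro ℓ
    induction ℓ with
    | zero =>
      intro p w w' hw hw' _
      have := hlabel p
      rw [hw, hw'] at this
      simpa [gnnIter] using (Option.some.inj this).symm
    | succ ℓ IH =>
      intro p w w' hw hw' hlp
      have hlen1 : p.1.length + 1 ≤ L + 1 := by omega
      have hlenΦ : (Φ p).1.length = p.1.length := hlen p
      -- construct child walk
      have childmem : ∀ z ∈ insert w (G.neighborFinset w),
          (p.1 ++ [z]).head? = some u ∧ (p.1 ++ [z]).length ≤ L + 1 ∧
          (p.1 ++ [z]).Chain' (fun a b => a = b ∨ G.Adj a b) := by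
        intro z hz
        simp only [Finset.mem_insert, SimpleGraph.mem_neighborFinset] at hz
        refine ⟨by rw [List.head?_append_of_ne_nil _ (hne p)]; exact p.2.1,
          by simpa using hlen1, ?_⟩
        refine List.isChain_append.2 ⟨p.2.2.2, List.isChain_singleton z, ?_⟩
        intro x hx y hy
        rw [hw] at hx; simp at hx hy; subst hx; subst hy
        rcases hz with h | h
        · exact Or.inl h.symm
        · exact Or.inr h
      -- the map to the primed side: last vertex of Φ(child)
      set g := gnnIter G dim A B bias σ x0 with hgdef
      set g' := gnnIter G' dim A B bias σ x0' with hgdef'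
      have hgw : g ℓ w = g' ℓ w' := IH p w w' hw hw' (by omega)
      have childmem' : ∀ z' ∈ insert w' (G'.neighborFinset w'),
          ((Φ p).1 ++ [z']).head? = some u' ∧ ((Φ p).1 ++ [z']).length ≤ L + 1 ∧
          ((Φ p).1 ++ [z']).Chain' (fun a b => a = b ∨ G'.Adj a b) := by
        intro z' hz'
        simp only [Finset.mem_insert, SimpleGraph.mem_neighborFinset] at hz'
        refine ⟨by rw [List.head?_append_of_ne_nil _ (hne' (Φ p))]; exact (Φ p).2.1,
          by simp only [List.length_append, List.length_singleton]; omega, ?_⟩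
        refine List.isChain_append.2 ⟨(Φ p).2.2.2, List.isChain_singleton z', ?_⟩
        intro x hx y hy
        rw [hw'] at hx; simp at hx hy; subst hx; subst hy
        rcases hz' with h | h
        · exact Or.inl h.symm
        · exact Or.inr h
      have hkey : ∀ z hz, (Φ ⟨p.1 ++ [z], childmem z hz⟩).1.getLast? =
          some ((Φ ⟨p.1 ++ [z], childmem z hz⟩).1.getLast (hne' _)) :=
        fun z hz => List.getLast?_eq_getLast_of_ne_nil _
      have hPhiq : ∀ z hz, (Φ ⟨p.1 ++ [z], childmem z hz⟩).1 =
          (Φ p).1 ++ [(Φ ⟨p.1 ++ [z], childmem z hz⟩).1.getLast (hne' _)] := by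
        intro z hz
        obtain ⟨w'', he⟩ := hparent p ⟨p.1 ++ [z], childmem z hz⟩ ⟨z, rfl⟩
        have h3 : (Φ ⟨p.1 ++ [z], childmem z hz⟩).1.getLast? = some w'' := by
          rw [he]; exact List.getLast?_concat
        have h4 : w'' = (Φ ⟨p.1 ++ [z], childmem z hz⟩).1.getLast (hne' _) :=
          Option.some.inj (h3.symm.trans (hkey z hz))
        rw [← h4]; exact he
      have hmem : ∀ z hz, (Φ ⟨p.1 ++ [z], childmem z hz⟩).1.getLast (hne' _)
          ∈ insert w' (G'.neighborFinset w') := by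
        intro z hz
        have hc := (Φ ⟨p.1 ++ [z], childmem z hz⟩).2.2.2
        rw [hPhiq z hz] at hc
        have hr := (List.isChain_append.1 hc).2.2 w' (by rw [hw']; rfl)
          ((Φ ⟨p.1 ++ [z], childmem z hz⟩).1.getLast (hne' _)) rfl
        simp only [Finset.mem_insert, SimpleGraph.mem_neighborFinset]
        rcases hr with h | h
        · exact Or.inl h.symm
        · exact Or.inr h
      have hval : ∀ z hz, g ℓ z = g' ℓ ((Φ ⟨p.1 ++ [z], childmem z hz⟩).1.getLast (hne' _)) := by
        intro z hz
        refine IH ⟨p.1 ++ [z], childmem z hz⟩ z _ (List.getLast?_concat) (hkey z hz) ?_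
        show (p.1 ++ [z]).length + ℓ ≤ L + 1
        simp only [List.length_append, List.length_singleton]; omega
      have hsum : ∑ z ∈ insert w (G.neighborFinset w), g ℓ z
          = ∑ z ∈ insert w' (G'.neighborFinset w'), g' ℓ z := by
        refine Finset.sum_bij
          (fun z hz => (Φ ⟨p.1 ++ [z], childmem z hz⟩).1.getLast (hne' _))
          hmem ?_ ?_ hval
        · intro z1 h1 z2 h2 heq
          have heq' : (Φ ⟨p.1 ++ [z1], childmem z1 h1⟩).1.getLast (hne' _)
              = (Φ ⟨p.1 ++ [z2], childmem z2 h2⟩).1.getLast (hne' _) := heq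
          have : (Φ ⟨p.1 ++ [z1], childmem z1 h1⟩).1 = (Φ ⟨p.1 ++ [z2], childmem z2 h2⟩).1 := by
            rw [hPhiq z1 h1, hPhiq z2 h2, heq']
          have h3 : (⟨p.1 ++ [z1], childmem z1 h1⟩ :
              {p : List V // p.head? = some u ∧ p.length ≤ L + 1 ∧
                p.Chain' (fun a b => a = b ∨ G.Adj a b)}) = ⟨p.1 ++ [z2], childmem z2 h2⟩ :=
            Φ.injective (Subtype.ext this)
          have h4 : p.1 ++ [z1] = p.1 ++ [z2] := congrArg Subtype.val h3
          simpa using h4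
        · intro z' hz'
          set r := Φ.symm ⟨(Φ p).1 ++ [z'], childmem' z' hz'⟩ with hrdef
          have hΦr : (Φ r).1 = (Φ p).1 ++ [z'] := by
            rw [hrdef, Equiv.apply_symm_apply]
          obtain ⟨z, her⟩ := hparent' p r ⟨z', hΦr⟩
          have hz : z ∈ insert w (G.neighborFinset w) := by
            have hc := r.2.2.2
            rw [her] at hc
            have hr2 := (List.isChain_append.1 hc).2.2 w (by rw [hw]; rfl) z rfl
            simp only [Finset.mem_insert, SimpleGraph.mem_neighborFinset]
            rcases hr2 with h | h
            · exact Or.inl h.symm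
            · exact Or.inr h
          refine ⟨z, hz, ?_⟩
          have hqr : (⟨p.1 ++ [z], childmem z hz⟩ :
              {p : List V // p.head? = some u ∧ p.length ≤ L + 1 ∧
                p.Chain' (fun a b => a = b ∨ G.Adj a b)}) = r := Subtype.ext her.symm
          have h6 : (Φ ⟨p.1 ++ [z], childmem z hz⟩).1.getLast? = some z' := by
            rw [hqr, hΦr]; exact List.getLast?_concat
          exact Option.some.inj ((hkey z hz).symm.trans h6)
      -- cancel the endpoint term
      have hwnot : w ∉ G.neighborFinset w := by
        simp [SimpleGraph.mem_neighborFinset]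
      have hwnot' : w' ∉ G'.neighborFinset w' := by
        simp [SimpleGraph.mem_neighborFinset]
      rw [Finset.sum_insert hwnot, Finset.sum_insert hwnot'] at hsum
      have hnb : ∑ v ∈ G.neighborFinset w, g ℓ v = ∑ v ∈ G'.neighborFinset w', g' ℓ v := by
        have := hsum
        rw [hgw] at this
        exact add_left_cancel this
      have hS : (∑ v ∈ G.neighborFinset w, (A ℓ).mulVec (g ℓ v))
          = ∑ v ∈ G'.neighborFinset w', (A ℓ).mulVec (g' ℓ v) := by
        simp only [← Matrix.mulVecLin_apply, ← map_sum, hnb]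
      show g (ℓ + 1) w = g' (ℓ + 1) w'
      funext i
      show σ (ℓ + 1) ((B ℓ).mulVec (g ℓ w) i
          + (∑ v ∈ G.neighborFinset w, (A ℓ).mulVec (g ℓ v)) i + bias ℓ i)
        = σ (ℓ + 1) ((B ℓ).mulVec (g' ℓ w') i
          + (∑ v ∈ G'.neighborFinset w', (A ℓ).mulVec (g' ℓ v)) i + bias ℓ i)
      rw [hgw, hS]
  have hu1 : ([u] : List V).head? = some u ∧ ([u] : List V).length ≤ L + 1 ∧
      ([u] : List V).Chain' (fun a b => a = b ∨ G.Adj a b) :=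
    ⟨rfl, by simp, List.isChain_singleton u⟩
  exact key L ⟨[u], hu1⟩ u u' rfl (by rw [hroot ⟨[u], hu1⟩ rfl]; rfl) (by show ([u] : List V).length + L ≤ L + 1; simp; omega)
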